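/- Suppose arg(c) = πp/q with p ∈ ℤ\{0}, q ∈ ℕ, gcd(p,q)=1 and p even. If f : I → E is c-almost periodic, then f is almost periodic (i.e., 1-almost periodic). -/

import Mathlib

/-- A set `S ⊆ ℝ` is relatively dense in `[0,∞)`: there is `l > 0` such that
every subinterval of `[0,∞)` of length `l` meets `S`. -/
def RelativelyDense (S : Set ℝ) : Prop :=
  ∃ l > 0, ∀ a : ℝ, 0 ≤ a → ∃ τ ∈ S, a ≤ τ ∧ τ ≤ a + l

/-- `f` is `c`-almost periodic on `I`. -/
def CAlmostPeriodic {E : Type*} [NormedAddCommGroup E] [NormedSpace ℂ E]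
    (I : Set ℝ) (c : ℂ) (f : ℝ → E) : Prop :=
  ∀ ε > 0, RelativelyDense {τ : ℝ | 0 < τ ∧ ∀ t ∈ I, ‖f (t + τ) - c • f t‖ ≤ ε}

/-- `f` is `c`-uniformly recurrent on `I`. -/
def CUniformlyRecurrent {E : Type*} [NormedAddCommGroup E] [NormedSpace ℂ E]
    (I : Set ℝ) (c : ℂ) (f : ℝ → E) : Prop :=
  ∃ α : ℕ → ℝ, StrictMono α ∧ (∀ n, 0 < α n) ∧
    Filter.Tendsto α Filter.atTop Filter.atTop ∧
    ∀ ε > 0, ∃ N : ℕ, ∀ n ≥ N, ∀ t ∈ I, ‖f (t + α n) - c • f t‖ ≤ ε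

/-! If `τ` is an `ε`-almost period of `f` for the factor `c`, then iterating `τ` shows that `kτ`
is a `kε`-almost period for the factor `cᵏ`; as `c ^ q = 1` when `p` is even, the multiples `qτ`
of the `(ε/q)`-almost periods of `f` form a relatively dense set of `ε`-almost periods. -/

theorem RelativelyDense.mono {S T : Set ℝ} (hS : RelativelyDense S) (hST : S ⊆ T) :
    RelativelyDense T := by
  obtain ⟨l, hl, hS⟩ := hS
  exact ⟨l, hl, fun a ha => let ⟨τ, hτ, hτa⟩ := hS a ha; ⟨τ, hST hτ, hτa⟩⟩

theorem RelativelyDense.image_const_mul {S : Set ℝ} (hS : RelativelyDense S) {r : ℝ}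
    (hr : 0 < r) : RelativelyDense ((r * ·) '' S) := by
  obtain ⟨l, hl, hS⟩ := hS
  refine ⟨r * l, mul_pos hr hl, fun a ha => ?_⟩
  obtain ⟨τ, hτ, hτa, hτb⟩ := hS (a / r) (div_nonneg ha hr.le)
  refine ⟨r * τ, Set.mem_image_of_mem _ hτ, ?_, ?_⟩
  · rwa [div_le_iff₀' hr] at hτa
  · calc r * τ ≤ r * (a / r + l) := mul_le_mul_of_nonneg_left hτb hr.le
      _ = a + r * l := by rw [mul_add, mul_div_cancel₀ _ hr.ne']

theorem norm_sub_pow_smul_le_of_norm_sub_smul_le {𝕜 E : Type*} [NormedField 𝕜]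
    [NormedAddCommGroup E] [NormedSpace 𝕜 E] {I : Set ℝ} {c : 𝕜} {f : ℝ → E} {τ δ : ℝ}
    (hc : ‖c‖ ≤ 1) (hI : ∀ t ∈ I, t + τ ∈ I) (hτ : ∀ t ∈ I, ‖f (t + τ) - c • f t‖ ≤ δ) :
    ∀ k : ℕ, ∀ t ∈ I, ‖f (t + k * τ) - c ^ k • f t‖ ≤ k * δ := by
  intro k
  induction k with
  | zero => simp
  | succ k ih =>
    intro t ht
    have hsplit : f (t + (k + 1 : ℕ) * τ) - c ^ (k + 1) • f t =
        (f ((t + τ) + k * τ) - c ^ k • f (t + τ)) + c ^ k • (f (t + τ) - c • f t) := by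
      rw [smul_sub, smul_smul, ← pow_succ, Nat.cast_succ, add_one_mul, add_comm (k * τ) τ,
        add_assoc]
      abel
    have hlast : ‖c ^ k • (f (t + τ) - c • f t)‖ ≤ δ :=
      calc ‖c ^ k • (f (t + τ) - c • f t)‖ ≤ ‖c‖ ^ k * ‖f (t + τ) - c • f t‖ := by
            rw [← norm_pow]; exact norm_smul_le _ _
        _ ≤ ‖f (t + τ) - c • f t‖ :=
            mul_le_of_le_one_left (norm_nonneg _) (pow_le_one₀ (norm_nonneg _) hc)
        _ ≤ δ := hτ t ht
    calc _ ≤ k * δ + δ := hsplit ▸ (norm_add_le _ _).trans (add_le_add (ih _ (hI t ht)) hlast)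
      _ = (k + 1 : ℕ) * δ := by push_cast; ring

theorem CAlmostPeriodic.pow {E : Type*} [NormedAddCommGroup E] [NormedSpace ℂ E] {I : Set ℝ}
    {c : ℂ} {f : ℝ → E} (hf : CAlmostPeriodic I c f) (hc : ‖c‖ ≤ 1)
    (hI : ∀ t ∈ I, ∀ s > 0, t + s ∈ I) {n : ℕ} (hn : 0 < n) : CAlmostPeriodic I (c ^ n) f := by
  intro ε hε
  have hn' : (0 : ℝ) < n := Nat.cast_pos.2 hn
  refine ((hf (ε / n) (div_pos hε hn')).image_const_mul hn').mono ?_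
  rintro _ ⟨τ, ⟨hτpos, hτ⟩, rfl⟩
  refine ⟨mul_pos hn' hτpos, fun t ht => ?_⟩
  calc _ ≤ n * (ε / n) :=
        norm_sub_pow_smul_le_of_norm_sub_smul_le hc (fun t ht => hI t ht τ hτpos) hτ n t ht
    _ = ε := mul_div_cancel₀ _ hn'.ne'

theorem Complex.exp_pi_mul_div_mul_I_pow_eq_one {p : ℤ} (hp : Even p) {q : ℕ} (hq : q ≠ 0) :
    Complex.exp ((Real.pi : ℂ) * p / q * Complex.I) ^ q = 1 := by
  rw [← Complex.exp_nat_mul, show (q : ℂ) * ((Real.pi : ℂ) * p / q * Complex.I) =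
      p * (Real.pi * Complex.I) by field_simp, Complex.exp_int_mul, Complex.exp_pi_mul_I]
  exact hp.neg_one_zpow

theorem cAlmostPeriodic_almostPeriodic_of_even_general {E : Type*} [NormedAddCommGroup E]
    [NormedSpace ℂ E]
    (I : Set ℝ) (hI : I = Set.univ ∨ I = Set.Ici (0 : ℝ))
    (p : ℤ) (q : ℕ) (hq : 0 < q)
    (hpeven : Even p)
    (c : ℂ) (hc : c = Complex.exp (((Real.pi : ℂ) * p / q) * Complex.I))
    (f : ℝ → E) (hap : CAlmostPeriodic I c f) :
    CAlmostPeriodic I 1 f := by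
  have hcq : c ^ q = 1 := hc ▸ Complex.exp_pi_mul_div_mul_I_pow_eq_one hpeven hq.ne'
  have hnorm : ‖c‖ = 1 := by
    rw [← pow_eq_one_iff_of_nonneg (norm_nonneg c) hq.ne', ← norm_pow, hcq, norm_one]
  have hshift : ∀ t ∈ I, ∀ s > 0, t + s ∈ I := by
    rcases hI with rfl | rfl
    · simp
    · intro t ht s hs
      exact Set.mem_Ici.2 (add_nonneg ht hs.le)
  exact hcq ▸ hap.pow hnorm.le hshift hq

/-- if c = exp(iπp/q) with p even, gcd(p,q) = 1, then any
c-almost periodic function is almost periodic. -/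
theorem cAlmostPeriodic_almostPeriodic_of_even {E : Type*} [NormedAddCommGroup E]
    [NormedSpace ℂ E]
    (I : Set ℝ) (hI : I = Set.univ ∨ I = Set.Ici (0 : ℝ))
    (p : ℤ) (q : ℕ) (hp : p ≠ 0) (hq : 0 < q) (hgcd : Int.gcd p (q : ℤ) = 1)
    (hpeven : Even p)
    (c : ℂ) (hc : c = Complex.exp (((Real.pi : ℂ) * p / q) * Complex.I))
    (f : ℝ → E) (hf : Continuous f) (hap : CAlmostPeriodic I c f) :
    CAlmostPeriodic I 1 f :=
  cAlmostPeriodic_almostPeriodic_of_even_general I hI p q hq hpeven c hc f hap
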